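/- arXiv:1412.6001 — 2 statements merged into one kernel-verified Lean document; each statement's English description precedes it below -/
import Mathlib

section
/- For every x in the open interval (0,1), one has x(1-x)·(log(x/(1-x)))² ≤ 4. -/
lemma sqrt_mul_neg_log_le_one {y : ℝ} (hy : 0 < y) (hy1 : y ≤ 1) :
    Real.sqrt y * (-Real.log y) ≤ 1 := by
  set u := Real.sqrt (Real.sqrt y) with hu
  have hsy : 0 < Real.sqrt y := Real.sqrt_pos.2 hy
  have hu0 : 0 < u := Real.sqrt_pos.2 hsy
  have hu1 : u ≤ 1 := by
    rw [hu, show (1:ℝ) = Real.sqrt (Real.sqrt 1) by simp]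
    exact Real.sqrt_le_sqrt (Real.sqrt_le_sqrt hy1)
  have hu2 : u ^ 2 = Real.sqrt y := Real.sq_sqrt hsy.le
  have hy4 : y = u ^ 4 := by
    have : (u ^ 2) ^ 2 = y := by rw [hu2]; exact Real.sq_sqrt hy.le
    nlinarith [this]
  have hlog : Real.log y = 4 * Real.log u := by
    rw [hy4, Real.log_pow]; push_cast; ring
  have hinv : Real.log (1 / u) ≤ 1 / u - 1 := Real.log_le_sub_one_of_pos (by positivity)
  rw [Real.log_div one_ne_zero hu0.ne', Real.log_one] at hinv
  have h2 : -Real.log u ≤ 1 / u - 1 := by linarith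
  have : Real.sqrt y * (-Real.log y) = u ^ 2 * (4 * (-Real.log u)) := by
    rw [← hu2, hlog]; ring
  rw [this]
  have h3 : u ^ 2 * (4 * (-Real.log u)) ≤ u ^ 2 * (4 * (1 / u - 1)) := by
    apply mul_le_mul_of_nonneg_left (by linarith) (by positivity)
  have h4 : u ^ 2 * (4 * (1 / u - 1)) = 4 * (u - u ^ 2) := by
    field_simp
  nlinarith [sq_nonneg (u - 1/2)]

theorem mul_one_sub_mul_sq_log_ratio_le_four :
    ∀ x ∈ Set.Ioo (0 : ℝ) 1, x * (1 - x) * (Real.log (x / (1 - x)))^2 ≤ 4 := by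
  rintro x ⟨hx0, hx1⟩
  have h1x : 0 < 1 - x := by linarith
  set a := Real.sqrt x with ha
  set b := Real.sqrt (1 - x) with hb
  have ha2 : a ^ 2 = x := Real.sq_sqrt hx0.le
  have hb2 : b ^ 2 = 1 - x := Real.sq_sqrt h1x.le
  have ha0 : 0 < a := Real.sqrt_pos.2 hx0
  have hb0 : 0 < b := Real.sqrt_pos.2 h1x
  have ha1 : a ≤ 1 := by nlinarith
  have hb1 : b ≤ 1 := by nlinarith
  have hP : a * (-Real.log x) ≤ 1 := sqrt_mul_neg_log_le_one hx0 hx1.le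
  have hQ : b * (-Real.log (1 - x)) ≤ 1 := sqrt_mul_neg_log_le_one h1x (by linarith)
  have hP0 : 0 ≤ a * (-Real.log x) := by
    have : Real.log x ≤ 0 := Real.log_nonpos hx0.le hx1.le
    nlinarith
  have hQ0 : 0 ≤ b * (-Real.log (1 - x)) := by
    have : Real.log (1 - x) ≤ 0 := Real.log_nonpos h1x.le (by linarith)
    nlinarith
  have hlog : Real.log (x / (1 - x)) = Real.log x - Real.log (1 - x) :=
    Real.log_div hx0.ne' h1x.ne'
  rw [hlog]
  set P := a * (-Real.log x)
  set Q := b * (-Real.log (1 - x))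
  have key : (a * Q - b * P) ^ 2 = a ^ 2 * b ^ 2 * (Real.log x - Real.log (1 - x)) ^ 2 := by
    simp only [P, Q]; ring
  rw [ha2, hb2] at key
  rw [← key]
  nlinarith [sq_nonneg (a * Q - b * P), sq_nonneg (a * Q + b * P), mul_nonneg ha0.le hQ0,
    mul_nonneg hb0.le hP0, mul_le_one₀ ha1 hQ0 hQ, mul_le_one₀ hb1 hP0 hP]
end

section
/- Let h: [0,1]ⁿ → ℝ be twice continuously differentiable with ‖h‖_∞ ≤ α, ‖∂h/∂xᵢ‖_∞ ≤ βᵢ, and ‖∂²h/∂xᵢ∂xⱼ‖_∞ ≤ γᵢⱼ. Fix y ∈ [0,1]ⁿ, let Y = (Y₁,…,Yₙ) have independent Bernoulli(yᵢ) components, and set U = h(Y) - h(y). Then E[U²] ≤ Σᵢ₌₁ⁿ (α γᵢᵢ + βᵢ²). -/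
/-!
Write `U = h(Y) - h(y)` and interpolate `φ(t) = E[U h(y + t(Y - y))]`, so that `E[U²] = φ(1) - φ(0)`
and `φ'(t) = ∑ᵢ E[(Yᵢ - yᵢ) ∂ᵢh(y + t(Y - y)) U]`. As `Yᵢ - yᵢ` is centred and independent of the
other coordinates, the `i`-th summand does not change when `∂ᵢh(y + t(Y - y)) U` is replaced by its
increment under `Yᵢ ↦ 0`; two mean value estimates bound that increment by `2αγᵢt + βᵢ²`, and
integrating over `t ∈ [0, 1]` gives `∑ᵢ (αγᵢ + βᵢ²)`.
-/

/-- The point of `{0,1}ⁿ ⊆ ℝⁿ` corresponding to a Boolean vector. -/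
def boolToReal {n : ℕ} (x : Fin n → Bool) : Fin n → ℝ := fun i => if x i then 1 else 0

/-- Probability of the outcome `x` under a product of independent `Bernoulli(yᵢ)`. -/
def bernWeight {n : ℕ} (y : Fin n → ℝ) (x : Fin n → Bool) : ℝ :=
  ∏ i, if x i then y i else 1 - y i

open Function Set

theorem update_mem_Icc {ι α : Type*} [DecidableEq ι] [Preorder α] {a b z : ι → α}
    (hz : z ∈ Icc a b) {i : ι} {c : α} (hc : c ∈ Icc (a i) (b i)) : update z i c ∈ Icc a b := by
  rw [← pi_univ_Icc] at hz ⊢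
  exact (update_mem_pi_iff_of_mem hz).2 fun _ => hc

theorem sub_le_of_hasDerivAt_le_affine {φ φ' : ℝ → ℝ} {a b : ℝ}
    (hφ : ∀ t ∈ Icc (0 : ℝ) 1, HasDerivAt φ (φ' t) t)
    (hφ' : ∀ t ∈ Icc (0 : ℝ) 1, φ' t ≤ a * t + b) : φ 1 - φ 0 ≤ a / 2 + b := by
  have hB (t : ℝ) : HasDerivAt (fun s => φ 0 + (a / 2 * s ^ 2 + b * s)) (a * t + b) t := by
    refine ((((hasDerivAt_pow 2 t).const_mul (a / 2)).add
      ((hasDerivAt_id t).const_mul b)).const_add (φ 0)).congr_deriv ?_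
    norm_num; ring
  have := image_le_of_deriv_right_le_deriv_boundary
    (fun t ht => (hφ t ht).continuousAt.continuousWithinAt)
    (fun t ht => (hφ t (Ico_subset_Icc_self ht)).hasDerivWithinAt) (by simp)
    (fun t _ => (hB t).continuousAt.continuousWithinAt) (fun t _ => (hB t).hasDerivWithinAt)
    (fun t ht => hφ' t (Ico_subset_Icc_self ht)) (right_mem_Icc.2 zero_le_one)
  linarith

section Calculus

variable {ι : Type*} [Fintype ι]

theorem Differentiable.hasDerivAt_comp_add_smul {g : (ι → ℝ) → ℝ} (hg : Differentiable ℝ g)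
    (y v : ι → ℝ) (t : ℝ) :
    HasDerivAt (fun s : ℝ => g (y + s • v)) (fderiv ℝ g (y + t • v) v) t := by
  simpa [Function.comp_def] using
    (hg _).hasFDerivAt.comp_hasDerivAt t (((hasDerivAt_id t).smul_const v).const_add y)

variable [DecidableEq ι]

theorem ContinuousLinearMap.apply_eq_sum_mul_single (L : (ι → ℝ) →L[ℝ] ℝ) (v : ι → ℝ) :
    L v = ∑ i, v i * L (Pi.single i 1) := by
  conv_lhs => rw [pi_eq_sum_univ' v]
  simp [map_sum]

theorem abs_sub_update_le_of_partial_le {g : (ι → ℝ) → ℝ} (hg : Differentiable ℝ g)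
    {a b : ι → ℝ} {i : ι} {C : ℝ} (hC : ∀ z ∈ Icc a b, |fderiv ℝ g z (Pi.single i 1)| ≤ C)
    {z : ι → ℝ} (hz : z ∈ Icc a b) {c : ℝ} (hc : c ∈ Icc (a i) (b i)) :
    |g (update z i c) - g z| ≤ C * |c - z i| := by
  have hderiv (u : ℝ) : HasDerivAt (fun u => g (update z i u))
      (fderiv ℝ g (update z i u) (Pi.single i 1)) u :=
    (hg _).hasFDerivAt.comp_hasDerivAt u (hasDerivAt_update z i u)
  simpa [Real.norm_eq_abs] using Convex.norm_image_sub_le_of_norm_hasDerivWithin_le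
    (fun u _ => (hderiv u).hasDerivWithinAt)
    (fun u hu => by simpa [Real.norm_eq_abs] using hC _ (update_mem_Icc hz hu))
    (convex_Icc (a i) (b i)) ⟨hz.1 i, hz.2 i⟩ hc

variable {h : (ι → ℝ) → ℝ} {i : ι} {α β γ : ℝ}

theorem abs_partial_mul_sub_sub_update_zero_le (hd : Differentiable ℝ h)
    (hd' : Differentiable ℝ fun z => fderiv ℝ h z (Pi.single i 1))
    (hα : ∀ x ∈ Icc (0 : ι → ℝ) 1, |h x| ≤ α)
    (hβ : ∀ x ∈ Icc (0 : ι → ℝ) 1, |fderiv ℝ h x (Pi.single i 1)| ≤ β)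
    (hγ : ∀ x ∈ Icc (0 : ι → ℝ) 1,
      |fderiv ℝ (fun z => fderiv ℝ h z (Pi.single i 1)) x (Pi.single i 1)| ≤ γ)
    {y X : ι → ℝ} (hy : y ∈ Icc 0 1) (hX : X ∈ Icc 0 1) {t : ℝ} (ht : t ∈ Icc (0 : ℝ) 1) :
    |fderiv ℝ h (y + t • (X - y)) (Pi.single i 1) * (h X - h y) -
        fderiv ℝ h (y + t • (update X i 0 - y)) (Pi.single i 1) * (h (update X i 0) - h y)| ≤
      2 * α * γ * t + β ^ 2 := by
  set z := y + t • (X - y)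
  have hXi : X i ∈ Icc 0 1 := ⟨hX.1 i, hX.2 i⟩
  have hyi : y i ∈ Icc 0 1 := ⟨hy.1 i, hy.2 i⟩
  have hz : z ∈ Icc 0 1 := (convex_Icc 0 1).add_smul_sub_mem hy hX ht
  have hc : (1 - t) * y i ∈ Icc 0 1 :=
    ⟨by nlinarith [ht.2, hyi.1], by nlinarith [ht.1, ht.2, hyi.1, hyi.2]⟩
  have hz' : y + t • (update X i 0 - y) = update z i ((1 - t) * y i) := by
    ext j
    rcases eq_or_ne j i with rfl | hj
    · simp [z]; ring
    · simp [z, hj]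
  have hA : |fderiv ℝ h (update z i ((1 - t) * y i)) (Pi.single i 1) -
      fderiv ℝ h z (Pi.single i 1)| ≤ γ * (t * X i) := by
    refine (abs_sub_update_le_of_partial_le hd' hγ hz hc).trans_eq ?_
    rw [show (1 - t) * y i - z i = -(t * X i) by simp [z]; ring, abs_neg,
      abs_of_nonneg (mul_nonneg ht.1 hXi.1)]
  have hU : |h (update X i 0) - h X| ≤ β * X i := by
    refine (abs_sub_update_le_of_partial_le hd hβ hX (c := 0) (by simp)).trans_eq ?_
    rw [zero_sub, abs_neg, abs_of_nonneg hXi.1]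
  have hA' : |fderiv ℝ h (update z i ((1 - t) * y i)) (Pi.single i 1)| ≤ β :=
    hβ _ (update_mem_Icc hz hc)
  have hU' : |h X - h y| ≤ 2 * α := by
    linarith [abs_sub (h X) (h y), hα X hX, hα y hy]
  have hα0 : 0 ≤ α := (abs_nonneg _).trans (hα y hy)
  have hγ0 : 0 ≤ γ := (abs_nonneg _).trans (hγ y hy)
  rw [hz']
  set A := fderiv ℝ h z (Pi.single i 1)
  set A' := fderiv ℝ h (update z i ((1 - t) * y i)) (Pi.single i 1)
  calc |A * (h X - h y) - A' * (h (update X i 0) - h y)|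
      = |(A' - A) * -(h X - h y) + A' * -(h (update X i 0) - h X)| := by ring_nf
    _ ≤ |A' - A| * |h X - h y| + |A'| * |h (update X i 0) - h X| := by
      rw [← abs_neg (h X - h y), ← abs_neg (h (update X i 0) - h X), ← abs_mul, ← abs_mul]
      exact abs_add_le _ _
    _ ≤ γ * (t * X i) * (2 * α) + β * (β * X i) :=
      add_le_add (mul_le_mul hA hU' (abs_nonneg _) (mul_nonneg hγ0 (mul_nonneg ht.1 hXi.1)))
        (mul_le_mul hA' hU (abs_nonneg _) ((abs_nonneg _).trans hA'))
    _ ≤ 2 * α * γ * t + β ^ 2 := by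
      nlinarith [mul_nonneg (mul_nonneg (mul_nonneg hα0 hγ0) ht.1) (sub_nonneg.2 hXi.2),
        mul_nonneg (sq_nonneg β) (sub_nonneg.2 hXi.2)]

end Calculus

theorem boolToReal_mem_Icc {n : ℕ} (x : Fin n → Bool) : boolToReal x ∈ Icc 0 1 :=
  ⟨fun i => by unfold boolToReal; split <;> simp, fun i => by unfold boolToReal; split <;> simp⟩

theorem boolToReal_update_false {n : ℕ} (x : Fin n → Bool) (i : Fin n) :
    boolToReal (update x i false) = update (boolToReal x) i 0 := by
  ext j
  rcases eq_or_ne j i with rfl | hj <;> simp [boolToReal, *]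

namespace bernWeight

variable {n : ℕ} {y : Fin n → ℝ}

theorem sum_eq_one (y : Fin n → ℝ) : ∑ x, bernWeight y x = 1 := by
  simp [bernWeight, ← Fintype.prod_sum (fun i (b : Bool) => if b then y i else 1 - y i)]

theorem nonneg (hy : y ∈ Icc 0 1) (x : Fin n → Bool) : 0 ≤ bernWeight y x :=
  Finset.prod_nonneg fun i _ => by
    have := hy.1 i; have := hy.2 i
    split <;> simp only [Pi.zero_apply, Pi.one_apply] at * <;> linarith

theorem apply_update (y : Fin n → ℝ) (x : Fin n → Bool) (i : Fin n) (b : Bool) :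
    bernWeight y (update x i b) =
      (if b then y i else 1 - y i) * ∏ j ∈ Finset.univ \ {i}, if x j then y j else 1 - y j := by
  simp only [bernWeight, Function.apply_update (fun j (c : Bool) => if c then y j else 1 - y j),
    Finset.prod_update_of_mem (Finset.mem_univ i)]

theorem sum_mul_centered_mul_update_false (y : Fin n → ℝ) (i : Fin n)
    (g : (Fin n → Bool) → ℝ) :
    ∑ x, bernWeight y x * ((boolToReal x i - y i) * g (update x i false)) = 0 := by
  refine Finset.sum_ninvolution (fun x => update x i (!x i)) (fun x => ?_)
    (fun x _ h => by simpa using congrFun h i) (fun _ => Finset.mem_univ _) (fun x => by simp)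
  conv_lhs => rw [← update_eq_self i x]
  cases x i <;> simp [bernWeight.apply_update, boolToReal] <;> ring

end bernWeight

theorem sum_bernWeight_centered_mul_partial_le {n : ℕ} {h : (Fin n → ℝ) → ℝ} {i : Fin n}
    {α β γ : ℝ} (hd : Differentiable ℝ h)
    (hd' : Differentiable ℝ fun z => fderiv ℝ h z (Pi.single i 1))
    (hα : ∀ x ∈ Icc (0 : Fin n → ℝ) 1, |h x| ≤ α)
    (hβ : ∀ x ∈ Icc (0 : Fin n → ℝ) 1, |fderiv ℝ h x (Pi.single i 1)| ≤ β)
    (hγ : ∀ x ∈ Icc (0 : Fin n → ℝ) 1,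
      |fderiv ℝ (fun z => fderiv ℝ h z (Pi.single i 1)) x (Pi.single i 1)| ≤ γ)
    {y : Fin n → ℝ} (hy : y ∈ Icc 0 1) {t : ℝ} (ht : t ∈ Icc (0 : ℝ) 1) :
    ∑ x, bernWeight y x * ((boolToReal x i - y i) *
      (fderiv ℝ h (y + t • (boolToReal x - y)) (Pi.single i 1) * (h (boolToReal x) - h y))) ≤
      2 * α * γ * t + β ^ 2 := by
  set K : (Fin n → ℝ) → ℝ := fun X => fderiv ℝ h (y + t • (X - y)) (Pi.single i 1) * (h X - h y)
  have hdecouple : ∑ x, bernWeight y x * ((boolToReal x i - y i) * K (boolToReal x)) =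
      ∑ x, bernWeight y x * ((boolToReal x i - y i) *
        (K (boolToReal x) - K (boolToReal (update x i false)))) := by
    rw [← sub_zero (∑ x, _),
      ← bernWeight.sum_mul_centered_mul_update_false y i (fun x => K (boolToReal x)),
      ← Finset.sum_sub_distrib]
    simp only [mul_sub]
  calc ∑ x, bernWeight y x * ((boolToReal x i - y i) * K (boolToReal x))
      ≤ ∑ x, bernWeight y x * (2 * α * γ * t + β ^ 2) := by
        rw [hdecouple]
        refine Finset.sum_le_sum fun x _ => mul_le_mul_of_nonneg_left ?_ (bernWeight.nonneg hy x)
        have hc : |boolToReal x i - y i| ≤ 1 := by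
          simpa [Real.dist_eq] using Real.dist_le_of_mem_Icc_01
            ⟨(boolToReal_mem_Icc x).1 i, (boolToReal_mem_Icc x).2 i⟩ ⟨hy.1 i, hy.2 i⟩
        rw [boolToReal_update_false]
        calc _ ≤ |boolToReal x i - y i| * |K (boolToReal x) - K (update (boolToReal x) i 0)| :=
              (le_abs_self _).trans (abs_mul _ _).le
          _ ≤ _ := mul_le_of_le_one_left (abs_nonneg _) hc
          _ ≤ _ := abs_partial_mul_sub_sub_update_zero_le hd hd' hα hβ hγ hy
              (boolToReal_mem_Icc x) ht
    _ = 2 * α * γ * t + β ^ 2 := by rw [← Finset.sum_mul, bernWeight.sum_eq_one, one_mul]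

theorem sum_bernWeight_mul_fderiv_le {n : ℕ} {h : (Fin n → ℝ) → ℝ} {α : ℝ} {β γ : Fin n → ℝ}
    (hd : Differentiable ℝ h)
    (hd' : ∀ i, Differentiable ℝ fun z => fderiv ℝ h z (Pi.single i 1))
    (hα : ∀ x ∈ Icc (0 : Fin n → ℝ) 1, |h x| ≤ α)
    (hβ : ∀ x ∈ Icc (0 : Fin n → ℝ) 1, ∀ i, |fderiv ℝ h x (Pi.single i 1)| ≤ β i)
    (hγ : ∀ x ∈ Icc (0 : Fin n → ℝ) 1, ∀ i,
      |fderiv ℝ (fun z => fderiv ℝ h z (Pi.single i 1)) x (Pi.single i 1)| ≤ γ i)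
    {y : Fin n → ℝ} (hy : y ∈ Icc 0 1) {t : ℝ} (ht : t ∈ Icc (0 : ℝ) 1) :
    ∑ x, bernWeight y x * ((h (boolToReal x) - h y) *
      fderiv ℝ h (y + t • (boolToReal x - y)) (boolToReal x - y)) ≤
        (∑ i, 2 * α * γ i) * t + ∑ i, β i ^ 2 := by
  simp_rw [ContinuousLinearMap.apply_eq_sum_mul_single _ (boolToReal _ - y), Finset.mul_sum,
    Finset.sum_mul, ← Finset.sum_add_distrib]
  rw [Finset.sum_comm]
  refine Finset.sum_le_sum fun i _ => le_of_eq_of_le ?_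
    (sum_bernWeight_centered_mul_partial_le hd (hd' i) hα (hβ · · i) (hγ · · i) hy ht)
  congr! 2 with x
  simp only [Pi.sub_apply]
  ring

theorem second_moment_bound (n : ℕ) (h : (Fin n → ℝ) → ℝ) (hh : ContDiff ℝ 2 h)
    (α : ℝ) (β γ : Fin n → ℝ)
    (hα : ∀ x ∈ Set.Icc (0 : Fin n → ℝ) 1, |h x| ≤ α)
    (hβ : ∀ x ∈ Set.Icc (0 : Fin n → ℝ) 1, ∀ i, |fderiv ℝ h x (Pi.single i 1)| ≤ β i)
    (hγ : ∀ x ∈ Set.Icc (0 : Fin n → ℝ) 1, ∀ i,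
      |fderiv ℝ (fun z => fderiv ℝ h z (Pi.single i 1)) x (Pi.single i 1)| ≤ γ i)
    (y : Fin n → ℝ) (hy : y ∈ Set.Icc (0 : Fin n → ℝ) 1) :
    ∑ x : Fin n → Bool, bernWeight y x * (h (boolToReal x) - h y)^2 ≤
      ∑ i, (α * γ i + (β i)^2) := by
  have hd : Differentiable ℝ h := hh.differentiable (by norm_num)
  have hd' (i : Fin n) : Differentiable ℝ fun z => fderiv ℝ h z (Pi.single i 1) :=
    ((hh.fderiv_right (m := 1) (by norm_num)).clm_apply contDiff_const).differentiable
      one_ne_zero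
  let φ (t : ℝ) :=
    ∑ x, bernWeight y x * ((h (boolToReal x) - h y) * h (y + t • (boolToReal x - y)))
  have hφ (t : ℝ) : HasDerivAt φ (∑ x, bernWeight y x * ((h (boolToReal x) - h y) *
      fderiv ℝ h (y + t • (boolToReal x - y)) (boolToReal x - y))) t :=
    HasDerivAt.fun_sum fun x _ => ((hd.hasDerivAt_comp_add_smul _ _ t).const_mul _).const_mul _
  have := sub_le_of_hasDerivAt_le_affine (fun t _ => hφ t)
    (fun t ht => sum_bernWeight_mul_fderiv_le hd hd' hα hβ hγ hy ht)
  simp only [φ, zero_smul, add_zero, one_smul, add_sub_cancel] at this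
  convert this using 1
  · simp_rw [← Finset.sum_sub_distrib, ← mul_sub, sq]
  · simp only [Finset.sum_add_distrib, Finset.sum_div]
    congr! 2 with i
    ring
end
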